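/- arXiv:2509.16034 — 3 statements merged into one kernel-verified Lean document; each statement's English description precedes it below -/
import Mathlib

section
/- For every positive integer n, the reduced factor complexity of the Thue–Morse sequence satisfies: ρ_t^red(n) = ρ_t^red((n+1)/2) if n is odd, and ρ_t^red(n) = ρ_t^red(m+1) + 2 if n = 4m or n = 4m+2 for a nonnegative integer m (with n positive). -/
/-- The reduction of a word: replace each maximal run of identical characters
by a single character. -/
def red {α : Type*} [DecidableEq α] (w : List α) : List α :=
  w.destutter (· ≠ ·)

/-- The length-`k` factor of the infinite sequence `x` (1-indexed) starting at
position `i`. -/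
def factorAt {α : Type*} (x : ℕ → α) (i k : ℕ) : List α :=
  (List.range k).map (fun j => x (i + j))

/-- The reduced factor complexity: the number of length-`n` factors of `x`,
counted up to reduced-equivalence (`red v = red w`). -/
noncomputable def redFactorComplexity {α : Type*} [DecidableEq α]
    (x : ℕ → α) (n : ℕ) : ℕ :=
  Set.ncard { u : List α | ∃ i ≥ 1, u = red (factorAt x i n) }

/-- The Thue–Morse sequence (1-indexed): `t n` is the parity of the number of
1's in the binary expansion of `n - 1`. -/
def thueMorse (n : ℕ) : Bool :=
  decide ((Nat.digits 2 (n - 1)).sum % 2 = 1)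

/-- The number of alternations (occurrences of 01 or 10) in a binary word. -/
def alt (w : List Bool) : ℕ :=
  (List.zipWith (fun a b => a != b) w w.tail).count true

/-- The minimum number of alternations among length-`k` factors of Thue–Morse. -/
noncomputable def tmAltMin (k : ℕ) : ℕ :=
  sInf { a : ℕ | ∃ i ≥ 1, a = alt (factorAt thueMorse i k) }

/-- The maximum number of alternations among length-`k` factors of Thue–Morse. -/
noncomputable def tmAltMax (k : ℕ) : ℕ :=
  sSup { a : ℕ | ∃ i ≥ 1, a = alt (factorAt thueMorse i k) }

/-- The Thue–Morse morphism `0 → 01`, `1 → 10`. -/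
def mu (w : List Bool) : List Bool :=
  w.flatMap (fun b => if b then [true, false] else [false, true])

/-- The regular paperfolding sequence (1-indexed): writing `n = n' * 2^k` with
`n'` odd, `f n = 1` iff `n' ≡ 3 (mod 4)`. -/
def paperfold (n : ℕ) : Bool :=
  decide ((n / 2 ^ (n.factorization 2)) % 4 = 3)

/-- The reduced abelian complexity: the number of length-`n` factors of `x`,
counted up to the equivalence identifying `v` and `w` whenever `red v` is a
rearrangement of the characters of `red w`. -/
noncomputable def redAbelianComplexity {α : Type*} [DecidableEq α]
    (x : ℕ → α) (n : ℕ) : ℕ :=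
  Set.ncard { m : Multiset α | ∃ i ≥ 1, m = ↑(red (factorAt x i n)) }

/-!
Over a two-letter alphabet a reduced word alternates, so it is determined by its first letter
and its length, i.e. by the first letter and the number of alternations of the original word.
The Thue–Morse language is closed under complement (`t (2^K + q) = ¬ t q` for `q ≤ 2^K`), and
the alternation counts of the factors of a given length form an interval, since sliding a
window by one position changes its count by at most one. Hence `ρ(L + 1) = 2 (M - m + 1)`,
where `m` and `M` are the least and the greatest alternation count of length-`(L + 1)` factors.

Every odd position of `t` starts an alternation, and the position `2j + 2` does exactly when
`j + 1` does not. So a factor of length `2l + 1` (resp. `2l + 2`) has `2l` (resp. `2l + 1`)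
alternations minus those of a factor of length `l + 1` (resp. `l + 1` or `l + 2`). This gives
recurrences for `m` and `M` which turn into the two identities for `ρ`.
-/

theorem alt_cons_cons (a b : Bool) (l : List Bool) :
    alt (a :: b :: l) = (a != b).toNat + alt (b :: l) := by
  cases a <;> cases b <;> simp [alt, add_comm]

theorem alt_map_not (w : List Bool) : alt (w.map not) = alt w := by
  simp [alt, ← List.map_tail, List.zipWith_map]

theorem destutter'_ne_eq_iterate_not (l : List Bool) (a : Bool) :
    l.destutter' (· ≠ ·) a = List.iterate not a (alt (a :: l) + 1) := by
  induction l generalizing a with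
  | nil => rfl
  | cons b l ih =>
    rw [alt_cons_cons]
    by_cases hab : a = b
    · subst hab
      simp [ih]
    · obtain rfl : b = !a := by cases a <;> cases b <;> simp_all
      simp [ih, add_comm]

theorem red_cons (a : Bool) (l : List Bool) :
    red (a :: l) = List.iterate not a (alt (a :: l) + 1) :=
  destutter'_ne_eq_iterate_not l a

theorem iterate_not_succ_injective :
    Function.Injective fun p : Bool × ℕ => List.iterate not p.1 (p.2 + 1) := by
  rintro ⟨a, m⟩ ⟨b, n⟩ h
  have hlen := congrArg List.length h
  simp only [List.length_iterate, add_left_inj] at hlen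
  simp only [List.iterate, List.cons.injEq] at h
  simp [h.1, hlen]

theorem factorAt_succ {α : Type*} (x : ℕ → α) (i k : ℕ) :
    factorAt x i (k + 1) = x i :: factorAt x (i + 1) k := by
  simp [factorAt, List.range_succ_eq_map, Nat.add_right_comm, Nat.add_assoc]

theorem exists_eq_of_steps_le_one {f : ℕ → ℕ}
    (hf : ∀ i, f (i + 1) ≤ f i + 1 ∧ f i ≤ f (i + 1) + 1) {a b c : ℕ} (hab : a ≤ b)
    (hc : min (f a) (f b) ≤ c ∧ c ≤ max (f a) (f b)) : ∃ k ∈ Set.Icc a b, f k = c := by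
  induction b, hab using Nat.le_induction with
  | base => exact ⟨a, Set.left_mem_Icc.2 le_rfl, by omega⟩
  | succ b hab ih =>
    by_cases h : min (f a) (f b) ≤ c ∧ c ≤ max (f a) (f b)
    · obtain ⟨k, hk, rfl⟩ := ih h
      exact ⟨k, ⟨hk.1, hk.2.trans b.le_succ⟩, rfl⟩
    · exact ⟨b + 1, ⟨by omega, le_rfl⟩, by have := hf b; omega⟩

theorem Nat.sSup_image_const_sub {s : Set ℕ} (hs : s.Nonempty) (c : ℕ) :
    sSup ((c - ·) '' s) = c - sInf s :=
  le_antisymm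
    (csSup_le (hs.image _) (by
      rintro _ ⟨a, ha, rfl⟩; exact Nat.sub_le_sub_left (Nat.sInf_le ha) c))
    (le_csSup ⟨c, by rintro _ ⟨a, -, rfl⟩; exact Nat.sub_le c a⟩
      ⟨_, Nat.sInf_mem hs, rfl⟩)

theorem Nat.sInf_image_const_sub {s : Set ℕ} (hs : s.Nonempty) (hs' : BddAbove s) (c : ℕ) :
    sInf ((c - ·) '' s) = c - sSup s :=
  le_antisymm (Nat.sInf_le ⟨_, Nat.sSup_mem hs hs', rfl⟩)
    (le_csInf (hs.image _) (by
      rintro _ ⟨a, ha, rfl⟩; exact Nat.sub_le_sub_left (le_csSup hs' ha) c))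

section Switches

variable (x : ℕ → Bool)

def switchCount (i L : ℕ) : ℕ :=
  ∑ j ∈ Finset.range L, (x (i + j) != x (i + j + 1)).toNat

theorem switchCount_le (i L : ℕ) : switchCount x i L ≤ L :=
  (Finset.sum_le_card_nsmul _ _ 1 fun _ _ => Bool.toNat_le _).trans_eq (by simp)

theorem switchCount_succ (i L : ℕ) :
    switchCount x i (L + 1) = switchCount x i L + (x (i + L) != x (i + L + 1)).toNat :=
  Finset.sum_range_succ _ _

theorem switchCount_succ' (i L : ℕ) :
    switchCount x i (L + 1) = (x i != x (i + 1)).toNat + switchCount x (i + 1) L := by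
  rw [switchCount, Finset.sum_range_succ', add_comm]
  simp only [switchCount, add_zero, ← add_assoc, Nat.add_right_comm i _ 1]

theorem switchCount_succ_left_le (i L : ℕ) :
    switchCount x (i + 1) L ≤ switchCount x i L + 1 ∧
      switchCount x i L ≤ switchCount x (i + 1) L + 1 := by
  have h₁ := switchCount_succ x i L
  have h₂ := switchCount_succ' x i L
  have := Bool.toNat_le (x i != x (i + 1))
  have := Bool.toNat_le (x (i + L) != x (i + L + 1))
  omega

theorem alt_factorAt_succ (i L : ℕ) : alt (factorAt x i (L + 1)) = switchCount x i L := by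
  induction L generalizing i with
  | zero => rfl
  | succ L ih =>
    rw [factorAt_succ, factorAt_succ, alt_cons_cons, ← factorAt_succ, ih, switchCount_succ']

theorem red_factorAt_succ (i L : ℕ) :
    red (factorAt x i (L + 1)) = List.iterate not (x i) (switchCount x i L + 1) := by
  rw [← alt_factorAt_succ, factorAt_succ, red_cons]

/-- `tmAltMin k` and `tmAltMax k` are by definition `sInf` and `sSup` of
`altCounts thueMorse k`. -/
def altCounts (k : ℕ) : Set ℕ := {a | ∃ i ≥ 1, a = alt (factorAt x i k)}

variable {x} in
theorem mem_altCounts_succ {L a : ℕ} :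
    a ∈ altCounts x (L + 1) ↔ ∃ i ≥ 1, switchCount x i L = a := by
  simp [altCounts, alt_factorAt_succ, eq_comm]

theorem altCounts_succ_nonempty (L : ℕ) : (altCounts x (L + 1)).Nonempty :=
  ⟨_, mem_altCounts_succ.2 ⟨1, le_rfl, rfl⟩⟩

theorem altCounts_succ_subset_Iic (L : ℕ) : altCounts x (L + 1) ⊆ Set.Iic L := by
  rintro a ha
  obtain ⟨i, -, rfl⟩ := mem_altCounts_succ.1 ha
  exact switchCount_le x i L

theorem bddAbove_altCounts_succ (L : ℕ) : BddAbove (altCounts x (L + 1)) :=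
  ⟨L, altCounts_succ_subset_Iic x L⟩

theorem altCounts_succ_eq_Icc (L : ℕ) :
    altCounts x (L + 1) = Set.Icc (sInf (altCounts x (L + 1))) (sSup (altCounts x (L + 1))) := by
  refine subset_antisymm
    (fun a ha => ⟨Nat.sInf_le ha, le_csSup (bddAbove_altCounts_succ x L) ha⟩) fun c hc => ?_
  obtain ⟨i₀, hi₀, h₀⟩ :=
    mem_altCounts_succ.1 (Nat.sInf_mem (altCounts_succ_nonempty x L))
  obtain ⟨i₁, hi₁, h₁⟩ := mem_altCounts_succ.1
    (Nat.sSup_mem (altCounts_succ_nonempty x L) (bddAbove_altCounts_succ x L))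
  have hf := fun i => switchCount_succ_left_le x i L
  obtain ⟨k, hk, hkc⟩ :
      ∃ k ∈ Set.Icc (min i₀ i₁) (max i₀ i₁), switchCount x k L = c := by
    simp only [Set.mem_Icc] at hc
    rcases le_total i₀ i₁ with h | h
    · simpa [h] using exists_eq_of_steps_le_one hf h (by omega)
    · simpa [h] using exists_eq_of_steps_le_one hf h (by omega)
  exact mem_altCounts_succ.2 ⟨k, by simp only [Set.mem_Icc] at hk; omega, hkc⟩

theorem ncard_altCounts_succ (L : ℕ) :
    (altCounts x (L + 1)).ncard =
      sSup (altCounts x (L + 1)) + 1 - sInf (altCounts x (L + 1)) := by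
  conv_lhs => rw [altCounts_succ_eq_Icc, ← Finset.coe_Icc, Set.ncard_coe_finset, Nat.card_Icc]

theorem sInf_altCounts_succ_le_sSup (L : ℕ) :
    sInf (altCounts x (L + 1)) ≤ sSup (altCounts x (L + 1)) :=
  csInf_le_csSup (altCounts_succ_nonempty x L) (OrderBot.bddBelow _) (bddAbove_altCounts_succ x L)

theorem sSup_altCounts_succ_le (L : ℕ) : sSup (altCounts x (L + 1)) ≤ L :=
  csSup_le (altCounts_succ_nonempty x L) (altCounts_succ_subset_Iic x L)

theorem sInf_altCounts_succ_le_succ (L : ℕ) :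
    sInf (altCounts x (L + 1)) ≤ sInf (altCounts x (L + 2)) := by
  obtain ⟨i, hi, h⟩ := mem_altCounts_succ.1 (Nat.sInf_mem (altCounts_succ_nonempty x (L + 1)))
  rw [← h, switchCount_succ]
  exact (Nat.sInf_le (mem_altCounts_succ.2 ⟨i, hi, rfl⟩)).trans (Nat.le_add_right _ _)

theorem sSup_altCounts_succ_le_succ (L : ℕ) :
    sSup (altCounts x (L + 1)) ≤ sSup (altCounts x (L + 2)) := by
  obtain ⟨i, hi, h⟩ := mem_altCounts_succ.1
    (Nat.sSup_mem (altCounts_succ_nonempty x L) (bddAbove_altCounts_succ x L))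
  calc sSup (altCounts x (L + 1)) = switchCount x i L := h.symm
    _ ≤ switchCount x i (L + 1) := switchCount_succ x i L ▸ Nat.le_add_right _ _
    _ ≤ sSup (altCounts x (L + 2)) :=
      le_csSup (bddAbove_altCounts_succ x (L + 1)) (mem_altCounts_succ.2 ⟨i, hi, rfl⟩)

theorem redFactorComplexity_succ_eq_two_mul_ncard
    (hx : ∀ i ≥ 1, ∀ k, ∃ j ≥ 1, factorAt x j k = (factorAt x i k).map not) (L : ℕ) :
    redFactorComplexity x (L + 1) = 2 * (altCounts x (L + 1)).ncard := by
  have hset : {u | ∃ i ≥ 1, u = red (factorAt x i (L + 1))} =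
      (fun p : Bool × ℕ => List.iterate not p.1 (p.2 + 1)) ''
        (Set.univ ×ˢ altCounts x (L + 1)) := by
    ext u
    simp only [Set.mem_image, Set.mem_prod, Set.mem_univ, true_and, Prod.exists,
      mem_altCounts_succ]
    constructor
    · rintro ⟨i, hi, rfl⟩
      exact ⟨x i, _, ⟨i, hi, rfl⟩, (red_factorAt_succ x i L).symm⟩
    · rintro ⟨b, _, ⟨i, hi, rfl⟩, rfl⟩
      obtain rfl | rfl : b = x i ∨ b = !x i := by cases b <;> cases x i <;> simp
      · exact ⟨i, hi, (red_factorAt_succ x i L).symm⟩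
      · obtain ⟨j, hj, hji⟩ := hx i hi (L + 1)
        have hhead : x j = !x i := by simpa [factorAt_succ] using congrArg List.head? hji
        have hcount : switchCount x j L = switchCount x i L := by
          rw [← alt_factorAt_succ, hji, alt_map_not, alt_factorAt_succ]
        exact ⟨j, hj, by rw [red_factorAt_succ, hhead, hcount]⟩
  rw [redFactorComplexity, hset, Set.ncard_image_of_injective _ iterate_not_succ_injective,
    Set.ncard_prod, Set.ncard_univ, Nat.card_eq_fintype_card, Fintype.card_bool]

end Switches
theorem Nat.exists_eq_two_mul_add_one_or_two {i : ℕ} (hi : 1 ≤ i) :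
    ∃ m, i = 2 * m + 1 ∨ i = 2 * m + 2 :=
  ⟨(i - 1) / 2, by omega⟩

theorem digits_two_sum_add_two_mul {b : ℕ} (hb : b < 2) (m : ℕ) :
    (Nat.digits 2 (b + 2 * m)).sum = b + (Nat.digits 2 m).sum := by
  rcases Nat.eq_zero_or_pos b with rfl | hb₀
  · rcases Nat.eq_zero_or_pos m with rfl | hm
    · simp
    · rw [Nat.digits_add 2 one_lt_two 0 m hb (Or.inr hm.ne'), List.sum_cons]
  · rw [Nat.digits_add 2 one_lt_two b m hb (Or.inl hb₀.ne'), List.sum_cons]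

theorem thueMorse_two_mul_add_one (m : ℕ) : thueMorse (2 * m + 1) = thueMorse (m + 1) := by
  have h := digits_two_sum_add_two_mul two_pos m
  simp_all [thueMorse]

theorem thueMorse_two_mul_add_two (m : ℕ) : thueMorse (2 * m + 2) = !thueMorse (m + 1) := by
  have h := digits_two_sum_add_two_mul one_lt_two m
  simp only [thueMorse, show 2 * m + 2 - 1 = 1 + 2 * m by omega, Nat.add_sub_cancel, h]
  rcases Nat.mod_two_eq_zero_or_one (Nat.digits 2 m).sum with h | h <;> simp [Nat.add_mod, h]

theorem thueMorse_two_pow_add (K : ℕ) {q : ℕ} (hq₀ : 1 ≤ q) (hq : q ≤ 2 ^ K) :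
    thueMorse (2 ^ K + q) = !thueMorse q := by
  induction K generalizing q with
  | zero =>
    obtain rfl : q = 1 := by omega
    exact thueMorse_two_mul_add_two 0
  | succ K ih =>
    obtain ⟨r, rfl | rfl⟩ := Nat.exists_eq_two_mul_add_one_or_two hq₀
    · rw [show 2 ^ (K + 1) + (2 * r + 1) = 2 * (2 ^ K + r) + 1 by ring,
        thueMorse_two_mul_add_one, thueMorse_two_mul_add_one, add_assoc,
        ih (by omega) (by rw [pow_succ] at hq; omega)]
    · rw [show 2 ^ (K + 1) + (2 * r + 2) = 2 * (2 ^ K + r) + 2 by ring,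
        thueMorse_two_mul_add_two, thueMorse_two_mul_add_two, add_assoc,
        ih (by omega) (by rw [pow_succ] at hq; omega)]

theorem exists_factorAt_thueMorse_eq_map_not {i : ℕ} (hi : 1 ≤ i) (k : ℕ) :
    ∃ j ≥ 1, factorAt thueMorse j k = (factorAt thueMorse i k).map not := by
  have hK : i + k < 2 ^ (i + k) := Nat.lt_two_pow_self
  refine ⟨2 ^ (i + k) + i, by omega, ?_⟩
  simp only [factorAt, List.map_map]
  refine List.map_congr_left fun j hj => ?_
  rw [List.mem_range] at hj
  simp only [Function.comp_apply, add_assoc]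
  exact thueMorse_two_pow_add _ (by omega) (by omega)

def thueMorseSwitch (j : ℕ) : ℕ := (thueMorse j != thueMorse (j + 1)).toNat

theorem switchCount_thueMorse_succ (i L : ℕ) :
    switchCount thueMorse i (L + 1) = switchCount thueMorse i L + thueMorseSwitch (i + L) :=
  switchCount_succ thueMorse i L

theorem thueMorseSwitch_two_mul_add_one (m : ℕ) : thueMorseSwitch (2 * m + 1) = 1 := by
  rw [thueMorseSwitch, thueMorse_two_mul_add_one, thueMorse_two_mul_add_two]
  cases thueMorse (m + 1) <;> rfl

theorem thueMorseSwitch_two_mul_add_two (m : ℕ) :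
    thueMorseSwitch (2 * m + 2) + thueMorseSwitch (m + 1) = 1 := by
  rw [thueMorseSwitch, thueMorseSwitch, thueMorse_two_mul_add_two,
    show 2 * m + 2 + 1 = 2 * (m + 1) + 1 by ring, thueMorse_two_mul_add_one]
  cases thueMorse (m + 1) <;> cases thueMorse (m + 1 + 1) <;> rfl

theorem thueMorseSwitch_add_succ_add_half {j : ℕ} (hj : 1 ≤ j) :
    thueMorseSwitch j + thueMorseSwitch (j + 1) + thueMorseSwitch ((j + 1) / 2) = 2 := by
  obtain ⟨m, rfl | rfl⟩ := Nat.exists_eq_two_mul_add_one_or_two hj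
  · have := thueMorseSwitch_two_mul_add_two m
    rw [show 2 * m + 1 + 1 = 2 * m + 2 by ring, show (2 * m + 2) / 2 = m + 1 by omega,
      thueMorseSwitch_two_mul_add_one]
    omega
  · have := thueMorseSwitch_two_mul_add_two m
    rw [show (2 * m + 2 + 1) / 2 = m + 1 by omega,
      show 2 * m + 2 + 1 = 2 * (m + 1) + 1 by ring, thueMorseSwitch_two_mul_add_one]
    omega

theorem switchCount_thueMorse_two_mul {i : ℕ} (hi : 1 ≤ i) (l : ℕ) :
    switchCount thueMorse i (2 * l) + switchCount thueMorse ((i + 1) / 2) l = 2 * l := by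
  induction l with
  | zero => rfl
  | succ l ih =>
    have hpair := thueMorseSwitch_add_succ_add_half (j := i + 2 * l) (by omega)
    rw [show 2 * (l + 1) = 2 * l + 1 + 1 by ring, switchCount_thueMorse_succ,
      switchCount_thueMorse_succ, switchCount_thueMorse_succ, ← add_assoc i,
      show (i + 2 * l + 1) / 2 = (i + 1) / 2 + l by omega] at *
    omega

theorem switchCount_thueMorse_two_mul_add_one_of_odd (m l : ℕ) :
    switchCount thueMorse (2 * m + 1) (2 * l + 1) + switchCount thueMorse (m + 1) l =
      2 * l + 1 := by
  have h := switchCount_thueMorse_two_mul (i := 2 * m + 1) (by omega) l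
  rw [show (2 * m + 1 + 1) / 2 = m + 1 by omega] at h
  rw [switchCount_thueMorse_succ, show 2 * m + 1 + 2 * l = 2 * (m + l) + 1 by ring,
    thueMorseSwitch_two_mul_add_one]
  omega

theorem switchCount_thueMorse_two_mul_add_one_of_even (m l : ℕ) :
    switchCount thueMorse (2 * m + 2) (2 * l + 1) + switchCount thueMorse (m + 1) (l + 1) =
      2 * l + 1 := by
  have h := switchCount_thueMorse_two_mul (i := 2 * m + 2) (by omega) l
  have hs := thueMorseSwitch_two_mul_add_two (m + l)
  rw [show (2 * m + 2 + 1) / 2 = m + 1 by omega] at h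
  rw [switchCount_thueMorse_succ, switchCount_thueMorse_succ,
    show 2 * m + 2 + 2 * l = 2 * (m + l) + 2 by ring, show m + 1 + l = m + l + 1 by ring]
  omega

theorem altCounts_thueMorse_two_mul_add_one (l : ℕ) :
    altCounts thueMorse (2 * l + 1) = (2 * l - ·) '' altCounts thueMorse (l + 1) := by
  ext a
  simp only [Set.mem_image, mem_altCounts_succ]
  constructor
  · rintro ⟨i, hi, rfl⟩
    have := switchCount_thueMorse_two_mul hi l
    exact ⟨_, ⟨(i + 1) / 2, by omega, rfl⟩, by omega⟩
  · rintro ⟨_, ⟨j, hj, rfl⟩, rfl⟩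
    have := switchCount_thueMorse_two_mul (i := 2 * j - 1) (by omega) l
    rw [show (2 * j - 1 + 1) / 2 = j by omega] at this
    exact ⟨2 * j - 1, by omega, by omega⟩

theorem altCounts_thueMorse_two_mul_add_two (l : ℕ) :
    altCounts thueMorse (2 * l + 2) =
      (2 * l + 1 - ·) '' (altCounts thueMorse (l + 1) ∪ altCounts thueMorse (l + 2)) := by
  ext a
  simp only [Set.mem_image, Set.mem_union, mem_altCounts_succ]
  constructor
  · rintro ⟨i, hi, rfl⟩
    obtain ⟨m, rfl | rfl⟩ := Nat.exists_eq_two_mul_add_one_or_two hi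
    · have := switchCount_thueMorse_two_mul_add_one_of_odd m l
      exact ⟨_, .inl ⟨m + 1, by omega, rfl⟩, by omega⟩
    · have := switchCount_thueMorse_two_mul_add_one_of_even m l
      exact ⟨_, .inr ⟨m + 1, by omega, rfl⟩, by omega⟩
  · rintro ⟨_, ⟨j, hj, rfl⟩ | ⟨j, hj, rfl⟩, rfl⟩
    · have := switchCount_thueMorse_two_mul_add_one_of_odd (j - 1) l
      rw [show j - 1 + 1 = j by omega] at this
      exact ⟨2 * (j - 1) + 1, by omega, by omega⟩
    · have := switchCount_thueMorse_two_mul_add_one_of_even (j - 1) l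
      rw [show j - 1 + 1 = j by omega] at this
      exact ⟨2 * (j - 1) + 2, by omega, by omega⟩

theorem tmAltMax_two_mul_add_one (l : ℕ) : tmAltMax (2 * l + 1) = 2 * l - tmAltMin (l + 1) :=
  (congrArg sSup (altCounts_thueMorse_two_mul_add_one l)).trans
    (Nat.sSup_image_const_sub (altCounts_succ_nonempty _ l) _)

theorem tmAltMin_two_mul_add_one (l : ℕ) : tmAltMin (2 * l + 1) = 2 * l - tmAltMax (l + 1) :=
  (congrArg sInf (altCounts_thueMorse_two_mul_add_one l)).trans
    (Nat.sInf_image_const_sub (altCounts_succ_nonempty _ l) (bddAbove_altCounts_succ _ l) _)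

theorem tmAltMax_two_mul_add_two (l : ℕ) :
    tmAltMax (2 * l + 2) = 2 * l + 1 - tmAltMin (l + 1) := by
  change sSup (altCounts thueMorse (2 * l + 2)) = _
  rw [altCounts_thueMorse_two_mul_add_two,
    Nat.sSup_image_const_sub (altCounts_succ_nonempty _ l).inl,
    csInf_union (OrderBot.bddBelow _) (altCounts_succ_nonempty _ l) (OrderBot.bddBelow _)
      (altCounts_succ_nonempty _ (l + 1)),
    inf_eq_left.2 (sInf_altCounts_succ_le_succ _ l)]
  rfl

theorem tmAltMin_two_mul_add_two (l : ℕ) :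
    tmAltMin (2 * l + 2) = 2 * l + 1 - tmAltMax (l + 2) := by
  change sInf (altCounts thueMorse (2 * l + 2)) = _
  rw [altCounts_thueMorse_two_mul_add_two,
    Nat.sInf_image_const_sub (altCounts_succ_nonempty _ l).inl
      ((bddAbove_altCounts_succ _ l).union (bddAbove_altCounts_succ _ (l + 1))),
    csSup_union (bddAbove_altCounts_succ _ l) (altCounts_succ_nonempty _ l)
      (bddAbove_altCounts_succ _ (l + 1)) (altCounts_succ_nonempty _ (l + 1)),
    sup_eq_right.2 (sSup_altCounts_succ_le_succ _ l)]
  rfl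

theorem tmAltMin_le_tmAltMax (L : ℕ) : tmAltMin (L + 1) ≤ tmAltMax (L + 1) :=
  sInf_altCounts_succ_le_sSup thueMorse L

theorem tmAltMax_le (L : ℕ) : tmAltMax (L + 1) ≤ L :=
  sSup_altCounts_succ_le thueMorse L

theorem redFactorComplexity_thueMorse (L : ℕ) :
    redFactorComplexity thueMorse (L + 1) = 2 * (tmAltMax (L + 1) + 1 - tmAltMin (L + 1)) := by
  rw [redFactorComplexity_succ_eq_two_mul_ncard thueMorse
    (fun _ hi => exists_factorAt_thueMorse_eq_map_not hi), ncard_altCounts_succ]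
  rfl

theorem redFactorComplexity_thueMorse_two_mul_add_one (l : ℕ) :
    redFactorComplexity thueMorse (2 * l + 1) = redFactorComplexity thueMorse (l + 1) := by
  have := tmAltMin_le_tmAltMax l
  have := tmAltMax_le l
  rw [redFactorComplexity_thueMorse, redFactorComplexity_thueMorse, tmAltMax_two_mul_add_one,
    tmAltMin_two_mul_add_one]
  omega

theorem redFactorComplexity_thueMorse_two_mul_add_two (l : ℕ) :
    redFactorComplexity thueMorse (2 * l + 2) = 2 * (tmAltMax (l + 2) + 1 - tmAltMin (l + 1)) := by
  have := tmAltMin_le_tmAltMax l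
  have := tmAltMax_le l
  have : tmAltMax (l + 2) ≤ l + 1 := tmAltMax_le (l + 1)
  rw [redFactorComplexity_thueMorse (2 * l + 1), tmAltMax_two_mul_add_two, tmAltMin_two_mul_add_two]
  omega

theorem redFactorComplexity_thueMorse_four_mul_add_two (m : ℕ) :
    redFactorComplexity thueMorse (4 * m + 2) = redFactorComplexity thueMorse (m + 1) + 2 := by
  have := tmAltMin_le_tmAltMax m
  have := tmAltMax_le m
  rw [show 4 * m + 2 = 2 * (2 * m) + 2 by ring, redFactorComplexity_thueMorse_two_mul_add_two,
    tmAltMax_two_mul_add_two, tmAltMin_two_mul_add_one, redFactorComplexity_thueMorse]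
  omega

theorem redFactorComplexity_thueMorse_four_mul_add_four (m : ℕ) :
    redFactorComplexity thueMorse (4 * m + 4) = redFactorComplexity thueMorse (m + 2) + 2 := by
  have : tmAltMin (m + 2) ≤ tmAltMax (m + 2) := tmAltMin_le_tmAltMax (m + 1)
  have : tmAltMax (m + 2) ≤ m + 1 := tmAltMax_le (m + 1)
  have hρ :
      redFactorComplexity thueMorse (m + 2) = 2 * (tmAltMax (m + 2) + 1 - tmAltMin (m + 2)) :=
    redFactorComplexity_thueMorse (m + 1)
  have hmax : tmAltMax (2 * m + 3) = 2 * m + 2 - tmAltMin (m + 2) :=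
    tmAltMax_two_mul_add_one (m + 1)
  have hmin : tmAltMin (2 * m + 2) = 2 * m + 1 - tmAltMax (m + 2) := tmAltMin_two_mul_add_two m
  rw [show 4 * m + 4 = 2 * (2 * m + 1) + 2 by ring, redFactorComplexity_thueMorse_two_mul_add_two,
    show 2 * m + 1 + 2 = 2 * m + 3 by ring, show 2 * m + 1 + 1 = 2 * m + 2 by ring, hmax, hmin, hρ]
  omega

theorem stmt0 (n : ℕ) (hn : 1 ≤ n) :
    (Odd n →
      redFactorComplexity thueMorse n =
        redFactorComplexity thueMorse ((n + 1) / 2)) ∧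
    (∀ m : ℕ, n = 4 * m ∨ n = 4 * m + 2 →
      redFactorComplexity thueMorse n =
        redFactorComplexity thueMorse (m + 1) + 2) := by
  refine ⟨?_, ?_⟩
  · rintro ⟨l, rfl⟩
    rw [show (2 * l + 1 + 1) / 2 = l + 1 by omega, redFactorComplexity_thueMorse_two_mul_add_one]
  · rintro m (rfl | rfl)
    · obtain ⟨m, rfl⟩ : ∃ k, m = k + 1 := ⟨m - 1, by omega⟩
      exact redFactorComplexity_thueMorse_four_mul_add_four m
    · exact redFactorComplexity_thueMorse_four_mul_add_two m
end

section
/- If w is a nonempty binary word containing exactly α alternations, then μ(w) contains exactly 2|w| − 1 − α alternations, where μ is the Thue–Morse morphism 0→01, 1→10. -/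
theorem mu_cons (b : Bool) (l : List Bool) : mu (b :: l) = b :: (!b) :: mu l := by
  cases b <;> rfl

theorem alt_cons_mu_cons (a b : Bool) (l : List Bool) :
    alt (a :: mu (b :: l)) = (a != b).toNat + alt (mu (b :: l)) := by
  rw [mu_cons, alt_cons_cons]

theorem Bool.toNat_not_bne_add_toNat_bne (a b : Bool) :
    ((!a) != b).toNat + (a != b).toNat = 1 := by
  cases a <;> cases b <;> rfl

theorem alt_mu_cons_add_alt_cons (b : Bool) (l : List Bool) :
    alt (mu (b :: l)) + alt (b :: l) = 2 * l.length + 1 := by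
  induction l generalizing b with
  | nil => cases b <;> rfl
  | cons c l ih =>
    have hblock : (b != !b).toNat = 1 := by cases b <;> rfl
    have hboundary := Bool.toNat_not_bne_add_toNat_bne b c
    rw [mu_cons, alt_cons_cons, alt_cons_mu_cons, alt_cons_cons, List.length_cons]
    have hrest := ih c
    omega

theorem stmt1 (w : List Bool) (hw : w ≠ []) (a : ℕ) (ha : alt w = a) :
    alt (mu w) = 2 * w.length - 1 - a := by
  obtain ⟨b, l, rfl⟩ := List.exists_cons_of_ne_nil hw
  have := alt_mu_cons_add_alt_cons b l
  rw [List.length_cons]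
  omega
end

section
/- For every integer n ≥ 2, m_{2n} = 2n − 1 − M_{n+1}, where m_k (resp. M_k) is the minimum (resp. maximum) number of alternations among length-k factors of the Thue–Morse sequence. -/
/-!
Writing `s` for the binary digit sum, Legendre's formula gives `v₂(m) + s(m) = s(m - 1) + 1`,
so the Thue–Morse word jumps between positions `m` and `m + 1` exactly when `v₂(m)` is even.
Hence a factor of length `k` starting at `i` has as many alternations as there are `m` with
`v₂(m)` even in the window `[i, i + k - 1)`, and minimising this over windows of length `2n - 1`
means maximising the complementary count of `m` with `v₂(m)` odd. Those `m` are exactly the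
doubles `2r` of the `r` with `v₂(r)` even, so a window of length `2n - 1` holds at most, and for
an even start exactly, as many of them as some window of length `n` holds `r` with `v₂(r)` even;
the largest such count is `M_{n+1}`.
-/

theorem padicValNat_two_add_digits_sum {m : ℕ} (hm : 0 < m) :
    padicValNat 2 m + (Nat.digits 2 m).sum = (Nat.digits 2 (m - 1)).sum + 1 := by
  have hm! := sub_one_mul_padicValNat_factorial (p := 2) m
  have hm1! := sub_one_mul_padicValNat_factorial (p := 2) (m - 1)
  rw [← Nat.mul_factorial_pred hm.ne', padicValNat.mul hm.ne' (Nat.factorial_ne_zero _)] at hm!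
  have := Nat.digit_sum_le 2 m
  have := Nat.digit_sum_le 2 (m - 1)
  omega

theorem thueMorse_ne_succ_iff {m : ℕ} (hm : 0 < m) :
    thueMorse m ≠ thueMorse (m + 1) ↔ Even (padicValNat 2 m) := by
  have := padicValNat_two_add_digits_sum hm
  simp only [thueMorse, ne_eq, decide_eq_decide, Nat.add_sub_cancel, Nat.even_iff]
  omega

theorem alt_cons_cons_s2 (a b : Bool) (w : List Bool) :
    alt (a :: b :: w) = alt (b :: w) + if a ≠ b then 1 else 0 := by
  cases a <;> cases b <;> simp [alt]

theorem alt_factorAt (x : ℕ → Bool) (i k : ℕ) :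
    alt (factorAt x i k) = Nat.count (fun j => x (i + j) ≠ x (i + j + 1)) (k - 1) := by
  induction k generalizing i with
  | zero => simp [factorAt, alt]
  | succ k ih =>
    cases k with
    | zero => simp [factorAt, alt]
    | succ k =>
      rw [factorAt_succ, factorAt_succ, alt_cons_cons_s2, ← factorAt_succ, ih, Nat.add_sub_cancel,
        Nat.add_sub_cancel, Nat.count_succ']
      simp only [add_zero, add_assoc, add_comm 1]

theorem alt_factorAt_thueMorse {i : ℕ} (hi : 1 ≤ i) (k : ℕ) :
    alt (factorAt thueMorse i k) = Nat.count (fun j => Even (padicValNat 2 (i + j))) (k - 1) := by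
  have : (fun j => thueMorse (i + j) ≠ thueMorse (i + j + 1)) =
      fun j => Even (padicValNat 2 (i + j)) :=
    funext fun j => propext (thueMorse_ne_succ_iff (by omega))
  rw [alt_factorAt]
  simp only [this]

theorem setOf_alt_factorAt_thueMorse (k : ℕ) :
    {a | ∃ i ≥ 1, a = alt (factorAt thueMorse i k)} =
      (fun i => Nat.count (fun j => Even (padicValNat 2 (i + j))) (k - 1)) '' Set.Ici 1 := by
  ext a
  exact exists_congr fun i => and_congr_right fun hi => by rw [alt_factorAt_thueMorse hi, eq_comm]

theorem Nat.count_add_count_not (p : ℕ → Prop) [DecidablePred p] (n : ℕ) :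
    Nat.count p n + Nat.count (fun k => ¬p k) n = n := by
  induction n with
  | zero => simp
  | succ n ih => by_cases h : p n <;> simp [Nat.count_succ, h] <;> omega

theorem padicValNat_two_two_mul_add_one (r : ℕ) : padicValNat 2 (2 * r + 1) = 0 :=
  padicValNat.eq_zero_of_not_dvd (by omega)

theorem count_not_even_padicValNat_two_mul (m n : ℕ) (hm : 1 ≤ m) :
    Nat.count (fun j => ¬Even (padicValNat 2 (2 * m + j))) (2 * n) =
      Nat.count (fun j => Even (padicValNat 2 (m + j))) n := by
  induction n with
  | zero => simp
  | succ n ih =>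
    rw [show 2 * (n + 1) = 2 * n + 1 + 1 by ring, Nat.count_succ, Nat.count_succ, Nat.count_succ,
      ih, ← mul_add, show 2 * m + (2 * n + 1) = 2 * (m + n) + 1 by ring,
      padicValNat_base_mul one_lt_two (by omega), padicValNat_two_two_mul_add_one]
    simp [Nat.even_add_one]

theorem count_not_even_padicValNat_two_mul_sub_one (m n : ℕ) (hm : 1 ≤ m) :
    Nat.count (fun j => ¬Even (padicValNat 2 (2 * m + j))) (2 * n - 1) =
      Nat.count (fun j => Even (padicValNat 2 (m + j))) n := by
  rcases n with _ | n
  · simp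
  · rw [← count_not_even_padicValNat_two_mul m _ hm, show 2 * (n + 1) = 2 * n + 1 + 1 by ring,
      Nat.count_succ, show 2 * m + (2 * n + 1) = 2 * (m + n) + 1 by ring,
      padicValNat_two_two_mul_add_one]
    simp

theorem count_not_even_padicValNat_odd_le (c L : ℕ) :
    Nat.count (fun j => ¬Even (padicValNat 2 (2 * c + 1 + j))) L ≤
      Nat.count (fun j => ¬Even (padicValNat 2 (2 * (c + 1) + j))) L := by
  calc _ ≤ Nat.count (fun j => ¬Even (padicValNat 2 (2 * c + 1 + j))) (L + 1) :=
        Nat.count_monotone _ L.le_succ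
    _ = _ := by
      rw [Nat.count_succ', add_zero, padicValNat_two_two_mul_add_one]
      simp only [show ∀ j, 2 * c + 1 + (j + 1) = 2 * (c + 1) + j by intro j; ring]
      simp

theorem exists_count_not_even_padicValNat_le (n : ℕ) {i : ℕ} (hi : 1 ≤ i) :
    ∃ m ≥ 1, Nat.count (fun j => ¬Even (padicValNat 2 (i + j))) (2 * n - 1) ≤
      Nat.count (fun j => Even (padicValNat 2 (m + j))) n := by
  rcases Nat.even_or_odd' i with ⟨m, rfl | rfl⟩
  · exact ⟨m, by omega, (count_not_even_padicValNat_two_mul_sub_one m n (by omega)).le⟩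
  · exact ⟨m + 1, by omega, (count_not_even_padicValNat_odd_le m _).trans
      (count_not_even_padicValNat_two_mul_sub_one _ n (by omega)).le⟩

theorem Nat.sInf_image_eq_sub_sSup_image {ι : Type*} {s : Set ι} (hs : s.Nonempty)
    {f g : ι → ℕ} {L : ℕ} (h : ∀ i ∈ s, f i + g i = L) :
    sInf (f '' s) = L - sSup (g '' s) := by
  have hbdd : BddAbove (g '' s) := ⟨L, by rintro _ ⟨i, hi, rfl⟩; have := h i hi; omega⟩
  obtain ⟨i₀, hi₀, hmax⟩ := Nat.sSup_mem (hs.image g) hbdd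
  apply le_antisymm
  · calc sInf (f '' s) ≤ f i₀ := Nat.sInf_le ⟨i₀, hi₀, rfl⟩
      _ = L - sSup (g '' s) := by have := h i₀ hi₀; omega
  · refine le_csInf (hs.image f) ?_
    rintro _ ⟨i, hi, rfl⟩
    have := le_csSup hbdd ⟨i, hi, rfl⟩
    have := h i hi
    omega

theorem sSup_count_not_even_padicValNat_eq (n : ℕ) :
    sSup ((fun i => Nat.count (fun j => ¬Even (padicValNat 2 (i + j))) (2 * n - 1)) '' Set.Ici 1) =
      sSup ((fun m => Nat.count (fun j => Even (padicValNat 2 (m + j))) n) '' Set.Ici 1) := by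
  apply le_antisymm
  · refine csSup_le (Set.nonempty_Ici.image _) ?_
    rintro _ ⟨i, hi, rfl⟩
    obtain ⟨m, hm, hle⟩ := exists_count_not_even_padicValNat_le n hi
    refine le_csSup_of_le ?_ ⟨m, hm, rfl⟩ hle
    exact ⟨n, by rintro _ ⟨m, -, rfl⟩; exact Nat.count_le _⟩
  · refine csSup_le (Set.nonempty_Ici.image _) ?_
    rintro _ ⟨m, hm, rfl⟩
    refine (count_not_even_padicValNat_two_mul_sub_one m n hm).symm.trans_le (le_csSup ?_ ?_)
    · exact ⟨2 * n - 1, by rintro _ ⟨i, -, rfl⟩; exact Nat.count_le _⟩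
    · exact ⟨2 * m, by simp only [Set.mem_Ici] at hm ⊢; omega, rfl⟩

theorem stmt2_general (n : ℕ) :
    tmAltMin (2 * n) = 2 * n - 1 - tmAltMax (n + 1) := by
  rw [tmAltMin, tmAltMax, setOf_alt_factorAt_thueMorse, setOf_alt_factorAt_thueMorse,
    Nat.sInf_image_eq_sub_sSup_image Set.nonempty_Ici (g := fun i =>
      Nat.count (fun j => ¬Even (padicValNat 2 (i + j))) (2 * n - 1))
      fun i _ => Nat.count_add_count_not _ _,
    Nat.add_sub_cancel, sSup_count_not_even_padicValNat_eq]

theorem stmt2 (n : ℕ) (hn : 2 ≤ n) :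
    tmAltMin (2 * n) = 2 * n - 1 - tmAltMax (n + 1) :=
  stmt2_general n
end
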